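/- The deconcatenation comultiplication on DQSym, Δ(M_𝔞) = Σ_{𝔞₁·𝔞₂ = 𝔞} M_{𝔞₁} ⊗ M_{𝔞₂}, is coassociative and is compatible with the quasi-shuffle product, making DQSym a bialgebra: Δ(M_𝔞 M_𝔟) = Δ(M_𝔞) Δ(M_𝔟). -/

import Mathlib

/-- The quasi-shuffle of two bicompositions (lists of pairs), as a multiset. -/
def qshuffle : List (ℕ × ℕ) → List (ℕ × ℕ) → Multiset (List (ℕ × ℕ))
  | a, [] => {a}
  | [], b :: bs => {b :: bs}
  | α :: as, β :: bs =>
      ((qshuffle as (β :: bs)).map (fun c => α :: c)) +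
      ((qshuffle (α :: as) bs).map (fun c => β :: c)) +
      ((qshuffle as bs).map (fun c => (α + β) :: c))
termination_by a b => a.length + b.length

abbrev L := List (ℕ × ℕ)

/-- All cuts of a list, as a multiset of pairs (prefix, suffix). -/
def cuts (a : L) : Multiset (L × L) :=
  (Multiset.range (a.length + 1)).map (fun k => (a.take k, a.drop k))

lemma cuts_nil : cuts [] = {([], [])} := rfl

lemma range_succ' (n : ℕ) : Multiset.range (n+1) = 0 ::ₘ (Multiset.range n).map Nat.succ := by
  simp [Multiset.range, List.range_succ_eq_map]

lemma cuts_cons (x : ℕ × ℕ) (a : L) :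
    cuts (x :: a) = ([], x :: a) ::ₘ (cuts a).map (fun p => (x :: p.1, p.2)) := by
  show (Multiset.range ((x::a).length + 1)).map _ = _
  rw [List.length_cons, range_succ', Multiset.map_cons, Multiset.map_map]
  simp [cuts, Multiset.map_map, Function.comp, Nat.succ_eq_add_one]
  rfl

lemma qshuffle_nil_right (a : L) : qshuffle a [] = {a} := by
  cases a <;> simp [qshuffle]

lemma qshuffle_nil_left (b : L) : qshuffle [] b = {b} := by
  cases b <;> simp [qshuffle]

lemma cuts_cons' (x : ℕ × ℕ) (a : L) :
    cuts (x :: a) = {(([], x :: a) : L × L)} + (cuts a).map (fun p => (x :: p.1, p.2)) := by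
  rw [cuts_cons]; rfl

lemma cuts_qshuffle : ∀ (a b : L),
    (qshuffle a b).bind cuts =
      (cuts a).bind (fun p => (cuts b).bind (fun q =>
        (qshuffle p.1 q.1).bind (fun c1 =>
          (qshuffle p.2 q.2).map (fun c2 => (c1, c2)))))
  | a, [] => by
      simp only [qshuffle_nil_right, cuts_nil, Multiset.singleton_bind, Multiset.bind_singleton]
      exact ((Multiset.bind_singleton (cuts a) id).trans (Multiset.map_id _)).symm
  | [], b :: bs => by
      simp only [qshuffle_nil_left, cuts_nil, qshuffle_nil_right, Multiset.singleton_bind,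
        Multiset.bind_singleton]
      exact ((Multiset.bind_singleton (cuts (b :: bs)) id).trans (Multiset.map_id _)).symm
  | α :: as, β :: bs => by
      have IH1 := cuts_qshuffle as (β :: bs)
      have IH2 := cuts_qshuffle (α :: as) bs
      have IH3 := cuts_qshuffle as bs
      rw [qshuffle]
      rw [Multiset.add_bind, Multiset.add_bind, Multiset.bind_map, Multiset.bind_map,
        Multiset.bind_map]
      simp only [cuts_cons', Multiset.bind_add, Multiset.bind_singleton, ← Multiset.map_bind]
      rw [IH1, IH2, IH3]
      simp only [cuts_cons', Multiset.add_bind, Multiset.bind_add, Multiset.singleton_bind,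
        Multiset.bind_map, qshuffle, qshuffle_nil_left, qshuffle_nil_right,
        Multiset.map_bind, Multiset.map_map, Multiset.map_add, Function.comp,
        Multiset.singleton_bind]
      abel
termination_by a b => a.length + b.length

/-- Coassociativity at the multiset level. -/
lemma cuts_coassoc : ∀ (a : L),
    (cuts a).bind (fun p => (cuts p.1).map (fun q => (q.1, q.2, p.2))) =
      (cuts a).bind (fun p => (cuts p.2).map (fun q => (p.1, q.1, q.2)))
  | [] => by simp [cuts_nil]
  | x :: a => by
      have IH := cuts_coassoc a
      have h : ((cuts a).bind (fun p => (cuts p.1).map (fun q => (q.1, q.2, p.2)))).map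
            (fun t => ((x :: t.1, t.2) : L × L × L)) =
          ((cuts a).bind (fun p => (cuts p.2).map (fun q => (p.1, q.1, q.2)))).map
            (fun t => (x :: t.1, t.2)) := by rw [IH]
      simp only [Multiset.map_bind, Multiset.map_map, Function.comp] at h
      simp only [cuts_cons', Multiset.add_bind, Multiset.bind_add, Multiset.singleton_bind,
        Multiset.bind_map, Multiset.map_add, Multiset.map_map, Multiset.map_bind,
        Function.comp, cuts_nil, Multiset.map_singleton, Multiset.bind_singleton]
      rw [h]
      abel

/-- The deconcatenation comultiplication of DQSym on the basis element M_a, in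
coordinates: Δ(M_a) = Σ_{a = a₁·a₂} M_{a₁} ⊗ M_{a₂}. -/
noncomputable def decon (a : List (ℕ × ℕ)) : (List (ℕ × ℕ) × List (ℕ × ℕ)) →₀ ℚ :=
  ∑ k ∈ Finset.range (a.length + 1), Finsupp.single (a.take k, a.drop k) 1

lemma decon_sum {N : Type*} [AddCommMonoid N] (a : L) (f : L × L → ℚ → N)
    (h0 : ∀ p, f p 0 = 0) (hadd : ∀ p c1 c2, f p (c1 + c2) = f p c1 + f p c2) :
    (decon a).sum f = ((cuts a).map (fun p => f p 1)).sum := by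
  rw [decon, ← Finsupp.sum_finset_sum_index h0 (fun p => hadd p)]
  rw [Finset.sum_congr rfl (fun k _ => Finsupp.sum_single_index (h0 _))]
  rw [Finset.sum_eq_multiset_sum, Finset.range_val]
  simp [cuts, Multiset.map_map, Function.comp]

lemma decon_eq (c : L) :
    decon c = ((cuts c).map (fun r => Finsupp.single r (1 : ℚ))).sum := by
  rw [decon, Finset.sum_eq_multiset_sum, Finset.range_val]
  simp [cuts, Multiset.map_map, Function.comp]

/-- DQSym is a bialgebra: the deconcatenation comultiplication is coassociative, and
it is compatible with the quasi-shuffle product, Δ(M_a M_b) = Δ(M_a) Δ(M_b) (the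
product on the tensor square being the componentwise quasi-shuffle). All identities
are stated on basis elements, in coordinates. -/
theorem DQSym_bialgebra (a b : List (ℕ × ℕ))
    (ha : ∀ p ∈ a, p ≠ (0, 0)) (hb : ∀ p ∈ b, p ≠ (0, 0)) :
    (((decon a).sum fun p c => c • ((decon p.1).sum fun q c' =>
        Finsupp.single (q.1, q.2, p.2) c')) =
      ((decon a).sum fun p c => c • ((decon p.2).sum fun q c' =>
        Finsupp.single (p.1, q.1, q.2) c'))) ∧
    (((qshuffle a b).map decon).sum =
      (decon a).sum (fun p c => (decon b).sum (fun q c' =>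
        (c * c') • (((qshuffle p.1 q.1).bind (fun c1 =>
          (qshuffle p.2 q.2).map (fun c2 => (c1, c2)))).map
            (fun r => Finsupp.single r (1 : ℚ))).sum))) := by
  
  constructor
  · -- coassociativity
    have e1 : ∀ (p : L × L), ((decon p.1).sum fun q c' =>
        Finsupp.single (q.1, q.2, p.2) c') =
        ((cuts p.1).map (fun q => Finsupp.single (q.1, q.2, p.2) (1 : ℚ))).sum := fun p =>
      decon_sum _ _ (by simp) (by simp [Finsupp.single_add])
    have e2 : ∀ (p : L × L), ((decon p.2).sum fun q c' =>
        Finsupp.single (p.1, q.1, q.2) c') =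
        ((cuts p.2).map (fun q => Finsupp.single (p.1, q.1, q.2) (1 : ℚ))).sum := fun p =>
      decon_sum _ _ (by simp) (by simp [Finsupp.single_add])
    simp only [e1, e2]
    rw [decon_sum _ _ (by intro p; simp) (by intro p c1 c2; rw [add_smul]),
        decon_sum _ _ (by intro p; simp) (by intro p c1 c2; rw [add_smul])]
    simp only [one_smul]
    have key := congrArg (fun M => (Multiset.map (fun r => Finsupp.single r (1 : ℚ)) M).sum)
      (cuts_coassoc a)
    simpa only [Multiset.map_bind, Multiset.sum_bind, Multiset.map_map, Function.comp]
      using key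
  · -- compatibility
    have e1 : ∀ (p : L × L), ((decon b).sum (fun q c' =>
        ((1:ℚ) * c') • (((qshuffle p.1 q.1).bind (fun c1 =>
          (qshuffle p.2 q.2).map (fun c2 => (c1, c2)))).map
            (fun r => Finsupp.single r (1 : ℚ))).sum)) =
        ((cuts b).map (fun q => (((qshuffle p.1 q.1).bind (fun c1 =>
          (qshuffle p.2 q.2).map (fun c2 => (c1, c2)))).map
            (fun r => Finsupp.single r (1 : ℚ))).sum)).sum := by
      intro p
      rw [decon_sum _ _ (by intro q; simp) (by intro q c1 c2; simp [mul_add, add_smul])]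
      simp
    rw [decon_sum _ _ ?h0 ?hadd]
    case h0 =>
      intro p
      simp only [zero_mul, zero_smul]
      exact Finset.sum_const_zero
    case hadd =>
      intro p c1 c2
      simp only [add_mul, add_smul]
      exact Finsupp.sum_add
    simp only [e1]
    have key := congrArg (fun M => (Multiset.map (fun r => Finsupp.single r (1 : ℚ)) M).sum)
      (cuts_qshuffle a b)
    simp only [Multiset.map_bind, Multiset.sum_bind, Multiset.map_map, Function.comp] at key
    simp only [decon_eq]
    simp only [Multiset.map_bind, Multiset.sum_bind, Multiset.map_map, Function.comp]
    exact key
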